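/- Every play of the graph game on (G, C, s, R) terminates and has at most n + 1 moves: its first n − 1 moves end at g₁,…,g_{n−1} respectively, its n-th move (made by the ∀-player) ends at some z_i with i ∈ {1,…,m}, and then either the ∃-player makes a winning (n+1)-st move to some vertex w_{i,j} ∈ R⁻¹(E) or the ∃-player has no legal move and loses. -/

import Mathlib

namespace PhutballQBF

/-- A literal: a variable `xₗ` (`pos l`) or its negation `¬xₗ` (`neg l`). -/
inductive Lit where
  | pos (l : ℕ)
  | neg (l : ℕ)
deriving DecidableEq

/-- The index of the variable occurring in a literal. -/
def Lit.var : Lit → ℕ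
  | .pos l => l
  | .neg l => l

/-- Evaluation of a literal under a Boolean assignment. -/
def Lit.eval (σ : ℕ → Bool) : Lit → Bool
  | .pos l => σ l
  | .neg l => !(σ l)

/-- Well-formedness of the 3CNF `F = F₁ ∧ ⋯ ∧ F_m`: the literal `l_{i,j}` (for
`1 ≤ i ≤ m`, `1 ≤ j ≤ 3`) mentions one of the variables `x₁, …, xₙ`. -/
def LitWF (n m : ℕ) (lit : ℕ → ℕ → Lit) : Prop :=
  ∀ i j, 1 ≤ i → i ≤ m → 1 ≤ j → j ≤ 3 → 1 ≤ (lit i j).var ∧ (lit i j).var ≤ n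

/-- The clause `Fᵢ = (l_{i,1} ∨ l_{i,2} ∨ l_{i,3})` evaluates to true under `σ`. -/
def ClauseTrue (lit : ℕ → ℕ → Lit) (i : ℕ) (σ : ℕ → Bool) : Prop :=
  ∃ j, 1 ≤ j ∧ j ≤ 3 ∧ (lit i j).eval σ = true

/-- The 3CNF formula `F = F₁ ∧ ⋯ ∧ F_m` evaluates to true under `σ`. -/
def FTrue (lit : ℕ → ℕ → Lit) (m : ℕ) (σ : ℕ → Bool) : Prop :=
  ∀ i, 1 ≤ i → i ≤ m → ClauseTrue lit i σ

/-- `QAux P i k σ`: the quantified statement with `k` variables `x_i, …, x_{i+k-1}`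
still to be quantified (existentially when the index is odd, universally when even),
the remaining variables having the values recorded in `σ`. -/
def QAux (P : (ℕ → Bool) → Prop) : ℕ → ℕ → (ℕ → Bool) → Prop
  | _, 0, σ => P σ
  | i, k + 1, σ =>
      if i % 2 = 1 then ∃ b, QAux P (i + 1) k (Function.update σ i b)
      else ∀ b, QAux P (i + 1) k (Function.update σ i b)

/-- Truth of the restricted quantified Boolean formula
`Q = ∃x₁ ∀x₂ ∃x₃ ⋯ ∀xₙ F(x₁, …, xₙ)`. -/
def QTrue (n m : ℕ) (lit : ℕ → ℕ → Lit) : Prop :=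
  QAux (FTrue lit m) 1 n (fun _ => false)

/-- The vertices of the graph `G` built from `Q` (with natural-number indices;
`g 0` is the extra vertex `g₀`). -/
inductive Vtx where
  | a (i : ℕ) | b (i : ℕ) | c (i : ℕ) | d (i : ℕ) | e (i : ℕ) | f (i : ℕ) | g (i : ℕ)
  | x (i : ℕ) | y (i : ℕ) | z (i : ℕ) | w (i : ℕ) (j : ℕ)
deriving DecidableEq

/-- A directed edge. -/
abbrev Edge := Vtx × Vtx

/-- The edge set `E(G)` of the graph `G` constructed from `Q` (with `n` variables and
`m` clauses): the variable components `G(xᵢ)`, the connecting edges `(gᵢ, aᵢ₊₁)` for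
`i = 0, …, n-1`, the edge `(gₙ, x₁)`, and the formula component `G(F)`. -/
def EG (n m : ℕ) : Set Edge :=
  { p | (∃ i, 1 ≤ i ∧ i ≤ n ∧
          (p = (Vtx.a i, Vtx.b i) ∨ p = (Vtx.a i, Vtx.c i) ∨ p = (Vtx.b i, Vtx.e i) ∨
           p = (Vtx.c i, Vtx.f i) ∨ p = (Vtx.e i, Vtx.d i) ∨ p = (Vtx.f i, Vtx.d i) ∨
           p = (Vtx.d i, Vtx.g i))) ∨
        (∃ i, i ≤ n - 1 ∧ p = (Vtx.g i, Vtx.a (i + 1))) ∨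
        p = (Vtx.g n, Vtx.x 1) ∨
        (∃ i, 1 ≤ i ∧ i ≤ m ∧
          (p = (Vtx.x i, Vtx.y i) ∨ p = (Vtx.y i, Vtx.z i) ∨ p = (Vtx.z i, Vtx.w i 1) ∨
           p = (Vtx.w i 1, Vtx.w i 2) ∨ p = (Vtx.w i 2, Vtx.w i 3))) ∨
        (∃ i, 1 ≤ i ∧ i ≤ m - 1 ∧ p = (Vtx.x i, Vtx.x (i + 1))) }

/-- The set `C = {g₀, g₁, …, g_{n-1}} ∪ {z₁, …, z_m}`. -/
def Cset (n m : ℕ) : Set Vtx :=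
  { v | (∃ i, i ≤ n - 1 ∧ v = Vtx.g i) ∨ (∃ i, 1 ≤ i ∧ i ≤ m ∧ v = Vtx.z i) }

/-- The relation `R ⊆ V(G) × E(G)`: `(w_{i,j}, (bₗ, eₗ)) ∈ R` iff `l_{i,j} = xₗ`, and
`(w_{i,j}, (cₗ, fₗ)) ∈ R` iff `l_{i,j} = ¬xₗ`. -/
def Rrel (lit : ℕ → ℕ → Lit) (m : ℕ) : Set (Vtx × Edge) :=
  { p | ∃ i j, 1 ≤ i ∧ i ≤ m ∧ 1 ≤ j ∧ j ≤ 3 ∧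
        ((∃ l, lit i j = Lit.pos l ∧ p = (Vtx.w i j, (Vtx.b l, Vtx.e l))) ∨
         (∃ l, lit i j = Lit.neg l ∧ p = (Vtx.w i j, (Vtx.c l, Vtx.f l)))) }

/-- `Rinv R E = R⁻¹(E)`: the vertices pointing some edge of `E`. -/
def Rinv (R : Set (Vtx × Edge)) (E : Set Edge) : Set Vtx :=
  { v | ∃ e ∈ E, (v, e) ∈ R }

/-- The set of (directed) edges traversed by a path given as its list of vertices. -/
def pathEdges (p : List Vtx) : Set Edge := { e | e ∈ p.zip p.tail }

/-- A legal move of the graph game from active vertex `u ∈ C` with current edge set `E`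
along the directed path `p` (a list of at least two pairwise distinct vertices whose
consecutive pairs are edges of `E`), ending at a vertex `v ∈ C ∪ R⁻¹(E)`, with all
internal vertices of `p` outside `C ∪ R⁻¹(E)`; the resulting edge set `E'` is obtained
by deleting the edges of `p` from `E`. -/
def LegalMoveVia (C : Set Vtx) (R : Set (Vtx × Edge))
    (u : Vtx) (E : Set Edge) (v : Vtx) (E' : Set Edge) (p : List Vtx) : Prop :=
  u ∈ C ∧ v ∈ C ∪ Rinv R E ∧
  2 ≤ p.length ∧ p.Nodup ∧
  p.head? = some u ∧ p.getLast? = some v ∧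
  List.Chain' (fun a b => (a, b) ∈ E) p ∧
  (∀ w ∈ (p.drop 1).dropLast, w ∉ C ∪ Rinv R E) ∧
  E' = E \ pathEdges p

/-- A legal move from `(u, E)` to `(v, E')` (along some path). -/
def LegalMove (C : Set Vtx) (R : Set (Vtx × Edge))
    (u : Vtx) (E : Set Edge) (v : Vtx) (E' : Set Edge) : Prop :=
  ∃ p, LegalMoveVia C R u E v E' p

/-- `MoverWins C R true u E` says that the player to move at the position with active
vertex `u` and current edge set `E` has a winning strategy; `MoverWins C R false u E`
says that the player to move loses whatever he does (in particular, if he has no legal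
move he loses immediately; a move to a vertex of `R⁻¹(E)` wins the game for the mover). -/
inductive MoverWins (C : Set Vtx) (R : Set (Vtx × Edge)) : Bool → Vtx → Set Edge → Prop
  | winsNow {u E v E'} : LegalMove C R u E v E' → v ∈ Rinv R E →
      MoverWins C R true u E
  | winsLater {u E v E'} : LegalMove C R u E v E' → MoverWins C R false v E' →
      MoverWins C R true u E
  | loses {u E} :
      (∀ v E', LegalMove C R u E v E' → v ∉ Rinv R E) →
      (∀ v E', LegalMove C R u E v E' → MoverWins C R true v E') →
      MoverWins C R false u E

/-- The two players of the graph game. -/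
inductive Player where
  | ex | fa
deriving DecidableEq

/-- The opponent of a player. -/
def Player.other : Player → Player
  | .ex => .fa
  | .fa => .ex

/-- A (maximal) play of the graph game on `(G, C, s, R)` starting from active vertex `s`
and edge set `E0`, with the ∃-player moving first.  `act k` and `edg k` are the active
vertex and edge set after `k` moves, `turn k` is the player who makes the `(k+1)`-st
move, and `len` is the total number of moves.  The play stops either because its last
move reached a vertex of `R⁻¹(E)` (the mover wins) or because the player to move has no
legal move (he loses); before that, no move may end in `R⁻¹(E)` without stopping. -/
structure Play (C : Set Vtx) (R : Set (Vtx × Edge)) (s : Vtx) (E0 : Set Edge) where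
  len : ℕ
  act : ℕ → Vtx
  edg : ℕ → Set Edge
  turn : ℕ → Player
  init_act : act 0 = s
  init_edg : edg 0 = E0
  init_turn : turn 0 = Player.ex
  turn_alt : ∀ k, turn (k + 1) = (turn k).other
  step : ∀ k, k < len → LegalMove C R (act k) (edg k) (act (k + 1)) (edg (k + 1))
  not_over : ∀ k, k + 1 < len → act (k + 1) ∉ Rinv R (edg k)
  maximal : (0 < len ∧ act len ∈ Rinv R (edg (len - 1))) ∨
            (∀ v E', ¬ LegalMove C R (act len) (edg len) v E')

/-!
Call the vertices of `C ∪ R⁻¹(E)` stops. A move from `u` runs through non-stops until its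
first stop, so any set `A` containing the successors of `u` and the successors of its own
non-stops contains the end of the move and the heads of all edges it deletes. From `g_k`
with `k < n - 1` this forces the move through `G(x_{k+1})` to `g_{k+1}`; from `g_{n-1}` the
path crosses `G(xₙ)` and `gₙ ∉ C` into the formula component and stops at the first `zᵢ`;
from `zᵢ` the only continuation is the chain `w_{i,1} w_{i,2} w_{i,3}`, which avoids `C`, so
a move from `zᵢ` wins on arrival. A move from `g_k` only deletes edges into `G(x_{k+1})`, so
the edges needed for the next move are still present and the play cannot stop early; the
parity of `n` settles who moves when.
-/

section

theorem forall_mem_of_isChain_cons_of_closed {α : Type*} {r : α → α → Prop}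
    {T A : Set α} {u : α} {q : List α} (hq : List.IsChain r (u :: q))
    (hint : ∀ w ∈ q.dropLast, w ∉ T) (hu : ∀ y, r u y → y ∈ A)
    (hA : ∀ x ∈ A, x ∉ T → ∀ y, r x y → y ∈ A) : ∀ w ∈ q, w ∈ A := by
  induction q generalizing u with
  | nil => simp
  | cons y q ih =>
    obtain ⟨huy, hq⟩ := List.isChain_cons_cons.mp hq
    intro w hw
    rcases List.mem_cons.mp hw with rfl | hw
    · exact hu w huy
    · obtain ⟨y', q', rfl⟩ := List.exists_cons_of_ne_nil (List.ne_nil_of_mem hw)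
      refine ih hq (fun w' hw' => hint w' ?_) (hA y (hu y huy) (hint y ?_)) w hw
      · rw [List.dropLast_cons_cons]; exact List.mem_cons_of_mem y hw'
      · simp [List.dropLast_cons_cons]

variable {C : Set Vtx} {R : Set (Vtx × Edge)} {u v : Vtx} {E E' : Set Edge} {p : List Vtx}

theorem LegalMoveVia.mem_of_closed (h : LegalMoveVia C R u E v E' p) {A : Set Vtx}
    (hu : ∀ y, (u, y) ∈ E → y ∈ A) (hA : ∀ x ∈ A, x ∉ C ∪ Rinv R E → ∀ y, (x, y) ∈ E → y ∈ A) :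
    v ∈ A ∧ ∀ e ∈ pathEdges p, e.2 ∈ A := by
  obtain ⟨-, -, hlen, -, hhead, hlast, hchain, hint, -⟩ := h
  obtain _ | ⟨u', _ | ⟨y, q⟩⟩ := p
  · simp at hlen
  · simp at hlen
  obtain rfl : u' = u := by simpa using hhead
  have hmem := forall_mem_of_isChain_cons_of_closed hchain (by simpa using hint) hu hA
  refine ⟨hmem v ?_, fun e he => hmem e.2 (List.of_mem_zip he).2⟩
  rw [List.getLast?_cons_cons] at hlast
  exact List.mem_of_getLast? hlast

theorem LegalMove.subset (h : LegalMove C R u E v E') : E' ⊆ E := by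
  obtain ⟨p, -, -, -, -, -, -, -, -, rfl⟩ := h
  exact Set.sdiff_subset

def varComponent (i : ℕ) : Set Vtx :=
  {Vtx.a i, Vtx.b i, Vtx.c i, Vtx.d i, Vtx.e i, Vtx.f i, Vtx.g i}

def IntactAfter (n m k : ℕ) (E : Set Edge) : Prop :=
  E ⊆ EG n m ∧ ∀ e ∈ EG n m, (∀ j ≤ k, e.2 ∉ varComponent j) → e ∈ E

variable {n m : ℕ} {lit : ℕ → ℕ → Lit}

theorem eq_w_of_mem_Rinv (h : v ∈ Rinv (Rrel lit m) E) :
    ∃ i j, 1 ≤ i ∧ i ≤ m ∧ 1 ≤ j ∧ j ≤ 3 ∧ v = Vtx.w i j := by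
  obtain ⟨e, -, i, j, hi, him, hj, hj3, ⟨_, _, h⟩ | ⟨_, _, h⟩⟩ := h <;>
    exact ⟨i, j, hi, him, hj, hj3, congrArg Prod.fst h⟩

theorem eq_of_mem_Cset_union_Rinv (h : v ∈ Cset n m ∪ Rinv (Rrel lit m) E) :
    (∃ i ≤ n - 1, v = Vtx.g i) ∨ (∃ i, 1 ≤ i ∧ i ≤ m ∧ v = Vtx.z i) ∨ ∃ i j, v = Vtx.w i j := by
  rcases h with (⟨i, hi, rfl⟩ | ⟨i, hi, him, rfl⟩) | h
  · exact Or.inl ⟨i, hi, rfl⟩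
  · exact Or.inr (Or.inl ⟨i, hi, him, rfl⟩)
  · obtain ⟨i, j, -, -, -, -, rfl⟩ := eq_w_of_mem_Rinv h
    exact Or.inr (Or.inr ⟨i, j, rfl⟩)

theorem intactAfter_zero_EG : IntactAfter n m 0 (EG n m) :=
  ⟨subset_rfl, fun _ he _ => he⟩

theorem IntactAfter.legalMove_g {k : ℕ} (hk : k + 1 ≤ n - 1) (hE : IntactAfter n m k E)
    (h : LegalMove (Cset n m) (Rrel lit m) (Vtx.g k) E v E') :
    v = Vtx.g (k + 1) ∧ IntactAfter n m (k + 1) E' := by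
  obtain ⟨p, hp⟩ := h
  have hu : ∀ y, (Vtx.g k, y) ∈ E → y ∈ varComponent (k + 1) := by
    intro y hy
    have hgy := hE.1 hy
    simp [EG] at hgy
    rcases hgy with ⟨-, rfl⟩ | ⟨rfl, -⟩
    · simp [varComponent]
    · omega
  have hA : ∀ x ∈ varComponent (k + 1), x ∉ Cset n m ∪ Rinv (Rrel lit m) E →
      ∀ y, (x, y) ∈ E → y ∈ varComponent (k + 1) := by
    intro x hx hxT y hy
    have hxy := hE.1 hy
    obtain rfl | hxg := eq_or_ne x (Vtx.g (k + 1))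
    · exact absurd (Or.inl (Or.inl ⟨k + 1, hk, rfl⟩)) hxT
    simp only [varComponent, Set.mem_insert_iff, Set.mem_singleton_iff] at hx ⊢
    rcases hx with rfl|rfl|rfl|rfl|rfl|rfl|rfl <;> simp [EG] at hxy <;> aesop
  obtain ⟨hv, hpath⟩ := hp.mem_of_closed hu hA
  obtain ⟨-, hvT, -, -, -, -, -, -, rfl⟩ := hp
  refine ⟨?_, hE.1.trans' Set.sdiff_subset, ?_⟩
  · have hT := eq_of_mem_Cset_union_Rinv hvT
    simp only [varComponent, Set.mem_insert_iff, Set.mem_singleton_iff] at hv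
    rcases hv with rfl|rfl|rfl|rfl|rfl|rfl|rfl <;> simp at hT ⊢
  · intro e he hj
    exact ⟨hE.2 e he fun j hjk => hj j (by omega), fun hep => hj (k + 1) le_rfl (hpath e hep)⟩

theorem eq_z_of_legalMove_g_pred (hn : 1 ≤ n) (hm : 1 ≤ m) (hE : E ⊆ EG n m)
    (h : LegalMove (Cset n m) (Rrel lit m) (Vtx.g (n - 1)) E v E') :
    ∃ i, 1 ≤ i ∧ i ≤ m ∧ v = Vtx.z i := by
  obtain ⟨p, hp⟩ := h
  set A : Set Vtx :=
    {v | v ∈ varComponent n ∨ ∃ i, 1 ≤ i ∧ i ≤ m ∧ (v = Vtx.x i ∨ v = Vtx.y i ∨ v = Vtx.z i)}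
  have hu : ∀ y, (Vtx.g (n - 1), y) ∈ E → y ∈ A := by
    intro y hy
    have hgy := hE hy
    simp [EG] at hgy
    rcases hgy with ⟨-, rfl⟩ | ⟨h, -⟩
    · simp [A, varComponent, Nat.sub_add_cancel hn]
    · omega
  have hA : ∀ x ∈ A, x ∉ Cset n m ∪ Rinv (Rrel lit m) E → ∀ y, (x, y) ∈ E → y ∈ A := by
    intro x hx hxT y hy
    have hxy := hE hy
    simp only [A, varComponent, Set.mem_insert_iff, Set.mem_singleton_iff, Set.mem_ofPred_eq] at hx ⊢
    rcases hx with (rfl|rfl|rfl|rfl|rfl|rfl|rfl) | ⟨i, hi, him, rfl|rfl|rfl⟩ <;>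
      simp [EG] at hxy
    · obtain ⟨_, -, -, ⟨rfl, rfl⟩ | ⟨rfl, rfl⟩⟩ := hxy <;> simp
    iterate 5 simp [hxy.2]
    · obtain ⟨h, -⟩ | rfl := hxy
      · omega
      · exact Or.inr ⟨1, le_rfl, hm, by simp⟩
    · obtain ⟨-, -, rfl⟩ | ⟨-, h, rfl⟩ := hxy
      · exact Or.inr ⟨i, hi, him, by simp⟩
      · exact Or.inr ⟨i + 1, by omega, by omega, by simp⟩
    · exact Or.inr ⟨i, hi, him, by simp [hxy.2.2]⟩
    · exact absurd (Or.inl (Or.inr ⟨i, hi, him, rfl⟩)) hxT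
  obtain ⟨hv, -⟩ := hp.mem_of_closed hu hA
  have hT := eq_of_mem_Cset_union_Rinv hp.2.1
  simp only [A, varComponent, Set.mem_insert_iff, Set.mem_singleton_iff, Set.mem_ofPred_eq] at hv
  rcases hv with (rfl|rfl|rfl|rfl|rfl|rfl|rfl) | ⟨i, hi, him, rfl|rfl|rfl⟩ <;> simp at hT ⊢ <;> omega

theorem mem_Rinv_of_legalMove_z {i : ℕ} (hE : E ⊆ EG n m)
    (h : LegalMove (Cset n m) (Rrel lit m) (Vtx.z i) E v E') : v ∈ Rinv (Rrel lit m) E := by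
  obtain ⟨p, hp⟩ := h
  have hu : ∀ y, (Vtx.z i, y) ∈ E → y ∈ {v | ∃ j, v = Vtx.w i j} := by
    intro y hy
    have hzy := hE hy
    simp [EG] at hzy
    exact ⟨1, hzy.2.2⟩
  have hA : ∀ x ∈ {v | ∃ j, v = Vtx.w i j}, x ∉ Cset n m ∪ Rinv (Rrel lit m) E →
      ∀ y, (x, y) ∈ E → y ∈ {v | ∃ j, v = Vtx.w i j} := by
    rintro x ⟨j, rfl⟩ - y hy
    have hxy := hE hy
    simp [EG] at hxy
    obtain ⟨_, -, -, ⟨⟨rfl, -⟩, rfl⟩ | ⟨⟨rfl, -⟩, rfl⟩⟩ := hxy <;> exact ⟨_, rfl⟩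
  obtain ⟨⟨j, rfl⟩, -⟩ := hp.mem_of_closed hu hA
  exact hp.2.1.resolve_left (by simp [Cset])

theorem IntactAfter.exists_legalMove_g {k : ℕ} (hk : k + 1 ≤ n - 1) (hE : IntactAfter n m k E) :
    ∃ v E', LegalMove (Cset n m) (Rrel lit m) (Vtx.g k) E v E' := by
  refine ⟨_, _, [Vtx.g k, Vtx.a (k + 1), Vtx.b (k + 1), Vtx.e (k + 1), Vtx.d (k + 1),
    Vtx.g (k + 1)], Or.inl ⟨k, by omega, rfl⟩, Or.inl (Or.inl ⟨k + 1, hk, rfl⟩),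
    by simp, by simp, rfl, rfl, ?_, ?_, rfl⟩
  · show List.IsChain _ _
    simp only [List.isChain_cons_cons, List.isChain_singleton, and_true]
    refine ⟨?_, ?_, ?_, ?_, ?_⟩ <;> apply hE.2 <;> simp [EG, varComponent] <;> omega
  · intro w hw hT
    have hw' := eq_of_mem_Cset_union_Rinv hT
    simp at hw
    rcases hw with rfl|rfl|rfl|rfl <;> simp at hw'

theorem IntactAfter.exists_legalMove_g_pred (hn : 1 ≤ n) (hm : 1 ≤ m) (hE : IntactAfter n m (n - 1) E) :
    ∃ v E', LegalMove (Cset n m) (Rrel lit m) (Vtx.g (n - 1)) E v E' := by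
  refine ⟨_, _, [Vtx.g (n - 1), Vtx.a n, Vtx.b n, Vtx.e n, Vtx.d n, Vtx.g n, Vtx.x 1, Vtx.y 1,
    Vtx.z 1], Or.inl ⟨n - 1, le_rfl, rfl⟩, Or.inl (Or.inr ⟨1, le_rfl, hm, rfl⟩),
    by simp, by simp; omega, rfl, rfl, ?_, ?_, rfl⟩
  · show List.IsChain _ _
    simp only [List.isChain_cons_cons, List.isChain_singleton, and_true]
    refine ⟨?_, ?_, ?_, ?_, ?_, ?_, ?_, ?_⟩ <;> apply hE.2 <;> simp [EG, varComponent] <;> omega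
  · intro w hw hT
    have hw' := eq_of_mem_Cset_union_Rinv hT
    simp at hw
    rcases hw with rfl|rfl|rfl|rfl|rfl|rfl|rfl <;> simp at hw'
    omega

variable {s : Vtx} {E0 : Set Edge}

theorem Play.turn_eq (P : Play C R s E0) (k : ℕ) :
    P.turn k = if Even k then Player.ex else Player.fa := by
  induction k with
  | zero => simpa using P.init_turn
  | succ k ih =>
    rw [P.turn_alt, ih]
    by_cases hk : Even k <;> simp [hk, Player.other, Nat.even_add_one]

theorem Play.lt_len (P : Play C R s E0) {k : ℕ} (hk : k ≤ P.len) (hR : ∀ E, P.act k ∉ Rinv R E)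
    (hmove : ∃ v E', LegalMove C R (P.act k) (P.edg k) v E') : k < P.len := by
  refine hk.lt_of_ne fun hlen => ?_
  rcases P.maximal with ⟨-, hwin⟩ | hstuck
  · exact hR _ (hlen ▸ hwin)
  · obtain ⟨v, E', h⟩ := hmove
    exact hstuck v E' (hlen ▸ h)

theorem Play.first_moves_forced (P : Play (Cset n m) (Rrel lit m) (Vtx.g 0) (EG n m)) :
    ∀ k ≤ n - 1, k ≤ P.len ∧ P.act k = Vtx.g k ∧ IntactAfter n m k (P.edg k) := by
  intro k
  induction k with
  | zero => exact fun _ => ⟨Nat.zero_le _, P.init_act, P.init_edg.symm ▸ intactAfter_zero_EG⟩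
  | succ k ih =>
    intro hk
    obtain ⟨hkl, hact, hE⟩ := ih (by omega)
    have hlt : k < P.len := P.lt_len hkl (fun _ h => by simpa [hact] using eq_w_of_mem_Rinv h)
      (hact ▸ hE.exists_legalMove_g hk)
    obtain ⟨hv, hE'⟩ := hE.legalMove_g hk (hact ▸ P.step k hlt)
    exact ⟨hlt, hv, hE'⟩

theorem Play.last_move (P : Play (Cset n m) (Rrel lit m) s E0) {k i : ℕ} (hk : k ≤ P.len)
    (hz : P.act k = Vtx.z i) (hE : P.edg k ⊆ EG n m) :
    (P.len = k + 1 ∧ ∃ i j, 1 ≤ i ∧ i ≤ m ∧ 1 ≤ j ∧ j ≤ 3 ∧ P.act (k + 1) = Vtx.w i j ∧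
        Vtx.w i j ∈ Rinv (Rrel lit m) (P.edg k)) ∨
      (P.len = k ∧ ∀ v E', ¬ LegalMove (Cset n m) (Rrel lit m) (P.act k) (P.edg k) v E') := by
  rcases hk.lt_or_eq with hlt | rfl
  · have hwin := mem_Rinv_of_legalMove_z hE (hz ▸ P.step k hlt)
    obtain ⟨i', j', hi', hi'm, hj', hj'3, hw⟩ := eq_w_of_mem_Rinv hwin
    exact Or.inl ⟨le_antisymm (not_lt.1 fun h => P.not_over k h hwin) hlt,
      i', j', hi', hi'm, hj', hj'3, hw, hw ▸ hwin⟩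
  · refine Or.inr ⟨rfl, P.maximal.resolve_left ?_⟩
    rintro ⟨-, h⟩
    simpa [hz] using eq_w_of_mem_Rinv h

end

theorem play_structure_general
    (n m : ℕ) (hn : Even n) (hn2 : 2 ≤ n) (hm : 1 ≤ m)
    (lit : ℕ → ℕ → Lit)
    (P : Play (Cset n m) (Rrel lit m) (Vtx.g 0) (EG n m)) :
    P.len ≤ n + 1 ∧
    (∀ i, 1 ≤ i → i ≤ n - 1 → P.act i = Vtx.g i) ∧
    n ≤ P.len ∧
    P.turn (n - 1) = Player.fa ∧
    (∃ i, 1 ≤ i ∧ i ≤ m ∧ P.act n = Vtx.z i) ∧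
    ((P.len = n + 1 ∧ P.turn n = Player.ex ∧
        ∃ i j, 1 ≤ i ∧ i ≤ m ∧ 1 ≤ j ∧ j ≤ 3 ∧ P.act (n + 1) = Vtx.w i j ∧
          Vtx.w i j ∈ Rinv (Rrel lit m) (P.edg n)) ∨
     (P.len = n ∧ P.turn n = Player.ex ∧
        ∀ v E', ¬ LegalMove (Cset n m) (Rrel lit m) (P.act n) (P.edg n) v E')) := by
  obtain ⟨hlen, hact, hE⟩ := P.first_moves_forced (n - 1) le_rfl
  have hlt : n - 1 < P.len := P.lt_len hlen
    (fun _ h => by simpa [hact] using eq_w_of_mem_Rinv h)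
    (hact ▸ hE.exists_legalMove_g_pred (by omega) hm)
  have hstep := P.step (n - 1) hlt
  rw [hact, Nat.sub_add_cancel (by omega)] at hstep
  obtain ⟨i, hi, him, hz⟩ := eq_z_of_legalMove_g_pred (by omega) hm hE.1 hstep
  have hend := P.last_move (by omega) hz (hstep.subset.trans hE.1)
  have hturn : P.turn n = Player.ex := by rw [P.turn_eq, if_pos hn]
  refine ⟨?_, fun k _ hk => (P.first_moves_forced k hk).2.1, by omega, ?_, ⟨i, hi, him, hz⟩,
    hend.imp (fun h => ⟨h.1, hturn, h.2⟩) (fun h => ⟨h.1, hturn, h.2⟩)⟩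
  · rcases hend with ⟨h, -⟩ | ⟨h, -⟩ <;> omega
  · rw [P.turn_eq, if_neg (by simp [Nat.even_sub (by omega : 1 ≤ n), hn])]

/-- Every play of the graph game on `(G, C, s, R)` terminates and has
at most `n + 1` moves: its first `n - 1` moves end at `g₁, …, g_{n-1}` respectively, its
`n`-th move (made by the ∀-player) ends at some `zᵢ` with `i ∈ {1, …, m}`, and then
either the ∃-player makes a winning `(n+1)`-st move to some vertex
`w_{i,j} ∈ R⁻¹(E)` or the ∃-player has no legal move and loses. -/
theorem play_structure
    (n m : ℕ) (hn : Even n) (hn2 : 2 ≤ n) (hm : 1 ≤ m)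
    (lit : ℕ → ℕ → Lit) (hwf : LitWF n m lit)
    (P : Play (Cset n m) (Rrel lit m) (Vtx.g 0) (EG n m)) :
    P.len ≤ n + 1 ∧
    (∀ i, 1 ≤ i → i ≤ n - 1 → P.act i = Vtx.g i) ∧
    n ≤ P.len ∧
    P.turn (n - 1) = Player.fa ∧
    (∃ i, 1 ≤ i ∧ i ≤ m ∧ P.act n = Vtx.z i) ∧
    ((P.len = n + 1 ∧ P.turn n = Player.ex ∧
        ∃ i j, 1 ≤ i ∧ i ≤ m ∧ 1 ≤ j ∧ j ≤ 3 ∧ P.act (n + 1) = Vtx.w i j ∧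
          Vtx.w i j ∈ Rinv (Rrel lit m) (P.edg n)) ∨
     (P.len = n ∧ P.turn n = Player.ex ∧
        ∀ v E', ¬ LegalMove (Cset n m) (Rrel lit m) (P.act n) (P.edg n) v E')) :=
  play_structure_general n m hn hn2 hm lit P

end PhutballQBF
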